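/- arXiv:2408.12196 — 6 statements merged into one kernel-verified Lean document; each statement's English description precedes it below -/
import Mathlib

section
/- Let s ≥ 1 and let A₁,…,A_s be 2×2 complex matrices with entries A_t = (α^{(t)}_{i,j}). Let (a_n)_{n≥0} and (b_n)_{n≥0} be complex sequences satisfying, for all n ≥ s, a_n = Σ_{t=1}^{s} (α^{(t)}_{1,1} a_{n−t} + α^{(t)}_{1,2} b_{n−t}) and b_n = Σ_{t=1}^{s} (α^{(t)}_{2,1} a_{n−t} + α^{(t)}_{2,2} b_{n−t}). Then both (a_n) and (b_n) satisfy the same homogeneous linear recurrence of order 2s: z_n = Σ_{i=1}^{2s} c^{(s)}_i z_{n−i} for all n ≥ 2s, where the coefficient vector c^{(s)} ∈ ℂ^{2s} is defined recursively by c^{(1)} = (tr(A₁), −det(A₁)) and, for s ≥ 2, c^{(s)}_i = c^{(s−1)}_i for 1 ≤ i ≤ s−1, c^{(s)}_s = c^{(s−1)}_s + tr(A_s), c^{(s)}_{s+ℓ} = c^{(s−1)}_{s+ℓ} − Det⟨A^{(ℓ,s)}⟩ for 1 ≤ ℓ ≤ s−2, c^{(s)}_{2s−1} = −Det⟨A^{(s−1,s)}⟩,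 and c^{(s)}_{2s} = −det(A_s). -/
open Matrix Finset

/-- The 2×2 matrix whose first column is the first column of `A` and whose
second column is the second column of `B`. -/
noncomputable def mixMat (A B : Matrix (Fin 2) (Fin 2) ℂ) : Matrix (Fin 2) (Fin 2) ℂ :=
  Matrix.of fun i j => if j = 0 then A i j else B i j

/-- `Det⟨A^{(i,j)}⟩ = det(A_{i,j}) + det(A_{j,i})`. -/
noncomputable def detPair (A B : Matrix (Fin 2) (Fin 2) ℂ) : ℂ :=
  (mixMat A B).det + (mixMat B A).det

/-!
Let `P = 1 - ∑ₜ X ^ t • Aₜ`, a matrix over `ℂ[X]`, and let `ℂ[X]` act on sequences with `X` the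
backward shift. The hypotheses say that the rows of `P` annihilate `(a, b)` from index `s` on.
Multiplying by the adjugate of `P`, whose entries have degree at most `s`, shows that `det P`
annihilates `a` and `b` from index `2 s` on. Finally, `det P = 1 - ∑ᵢ cᵢ Xⁱ`: expanding
`det (P_{m-1} - X ^ m • A_m)` with the polarization of the 2 × 2 determinant produces exactly
the recursive update of the coefficients.
-/

open Polynomial

section Shift

variable {R : Type*} [CommRing R]

noncomputable def backShift : Module.End R (ℕ → R) := LinearMap.funLeft R R (· - 1)

@[simp]
theorem backShift_pow_apply (k : ℕ) (z : ℕ → R) (n : ℕ) : (backShift ^ k) z n = z (n - k) := by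
  induction k generalizing z with
  | zero => rfl
  | succ k ih => rw [pow_succ, Module.End.mul_apply, ih]; rfl

theorem aeval_backShift_apply {d : ℕ} {p : R[X]} (hp : p.natDegree < d) (z : ℕ → R) (n : ℕ) :
    aeval backShift p z n = ∑ k ∈ range d, p.coeff k * z (n - k) := by
  simp [aeval_eq_sum_range' hp]

theorem aeval_backShift_eq_zero {s d : ℕ} {p : R[X]} (hp : p.natDegree ≤ d) {z : ℕ → R}
    (hz : ∀ n, s ≤ n → z n = 0) {n : ℕ} (hn : s + d ≤ n) : aeval backShift p z n = 0 := by
  rw [aeval_backShift_apply (Nat.lt_succ_of_le hp)]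
  refine sum_eq_zero fun k hk => ?_
  rw [hz _ (by have := mem_range.mp hk; omega), mul_zero]

theorem aeval_backShift_det_eq_zero {m s d : ℕ} (M : Matrix (Fin m) (Fin m) R[X])
    (hM : ∀ i j, (M.adjugate i j).natDegree ≤ d) (v : Fin m → ℕ → R)
    (hv : ∀ i n, s ≤ n → ∑ j, aeval backShift (M i j) (v j) n = 0)
    (k : Fin m) {n : ℕ} (hn : s + d ≤ n) : aeval backShift M.det (v k) n = 0 := by
  have hdet : aeval backShift M.det (v k)
      = ∑ i, aeval backShift (M.adjugate k i) (∑ j, aeval backShift (M i j) (v j)) :=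
    calc aeval backShift M.det (v k)
        = ∑ j, aeval backShift ((M.adjugate * M) k j) (v j) := by
          simp [Matrix.adjugate_mul, Matrix.one_apply, apply_ite, ite_apply]
      _ = _ := by
          simp only [Matrix.mul_apply, map_sum, map_mul, LinearMap.sum_apply, Module.End.mul_apply]
          exact sum_comm
  rw [hdet, Finset.sum_apply]
  exact sum_eq_zero fun i _ => aeval_backShift_eq_zero (hM k i)
    (fun n hn => by rw [Finset.sum_apply]; exact hv i n hn) hn

end Shift

section Poly

variable {R : Type*} [CommRing R]

noncomputable def recurrencePoly (f : ℕ → R) (d : ℕ) : R[X] := 1 - ∑ i ∈ Icc 1 d, C (f i) * X ^ i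

theorem coeff_sum_C_mul_X_pow (S : Finset ℕ) (f : ℕ → R) (k : ℕ) :
    (∑ i ∈ S, C (f i) * X ^ i).coeff k = if k ∈ S then f k else 0 := by
  simp [finsetSum_coeff]

theorem coeff_recurrencePoly (f : ℕ → R) (d k : ℕ) :
    (recurrencePoly f d).coeff k = (if k = 0 then 1 else 0) - if k ∈ Icc 1 d then f k else 0 := by
  rw [recurrencePoly, coeff_sub, coeff_one, coeff_sum_C_mul_X_pow]

theorem aeval_backShift_recurrencePoly (f : ℕ → R) (d : ℕ) (z : ℕ → R) (n : ℕ) :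
    aeval backShift (recurrencePoly f d) z n = z n - ∑ i ∈ Icc 1 d, f i * z (n - i) := by
  simp [recurrencePoly]

variable {ι : Type*} [DecidableEq ι]

noncomputable def recMatrix (A : ℕ → Matrix ι ι R) (s : ℕ) : Matrix ι ι R[X] :=
  1 - ∑ t ∈ Icc 1 s, (X ^ t : R[X]) • (A t).map C

theorem recMatrix_apply (A : ℕ → Matrix ι ι R) (s : ℕ) (i j : ι) :
    recMatrix A s i j = (if i = j then 1 else 0) - ∑ t ∈ Icc 1 s, C (A t i j) * X ^ t := by
  simp [recMatrix, Matrix.one_apply, Matrix.sum_apply]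

theorem natDegree_recMatrix_apply_le (A : ℕ → Matrix ι ι R) (s : ℕ) (i j : ι) :
    (recMatrix A s i j).natDegree ≤ s := by
  rw [recMatrix_apply]
  refine (natDegree_sub_le _ _).trans (max_le ?_ ?_)
  · split_ifs <;> simp
  · exact natDegree_sum_le_of_forall_le _ _ fun t ht =>
      (natDegree_C_mul_X_pow_le _ _).trans (mem_Icc.mp ht).2

theorem aeval_backShift_recMatrix_apply (A : ℕ → Matrix ι ι R) (s : ℕ) (i j : ι) (z : ℕ → R)
    (n : ℕ) : aeval backShift (recMatrix A s i j) z n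
      = (if i = j then z n else 0) - ∑ t ∈ Icc 1 s, A t i j * z (n - t) := by
  rw [recMatrix_apply]
  split_ifs <;> simp

theorem aeval_backShift_recMatrix_eq_zero [Fintype ι] (A : ℕ → Matrix ι ι R) (s : ℕ)
    (v : ι → ℕ → R) (hv : ∀ i n, s ≤ n → v i n = ∑ t ∈ Icc 1 s, ∑ j, A t i j * v j (n - t))
    (i : ι) (n : ℕ) (hn : s ≤ n) : ∑ j, aeval backShift (recMatrix A s i j) (v j) n = 0 := by
  simp only [aeval_backShift_recMatrix_apply, sum_sub_distrib, sum_ite_eq, mem_univ, if_true]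
  rw [sum_comm, ← hv i n hn, sub_self]

end Poly

section TwoByTwo

theorem natDegree_adjugate_recMatrix_le {R : Type*} [CommRing R]
    (A : ℕ → Matrix (Fin 2) (Fin 2) R) (s : ℕ) (i j : Fin 2) :
    ((recMatrix A s).adjugate i j).natDegree ≤ s := by
  rw [Matrix.adjugate_fin_two]
  fin_cases i <;> fin_cases j <;> simp [natDegree_recMatrix_apply_le]

def polarDet {R : Type*} [CommRing R] (M N : Matrix (Fin 2) (Fin 2) R) : R :=
  M 0 0 * N 1 1 + N 0 0 * M 1 1 - M 0 1 * N 1 0 - N 0 1 * M 1 0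

theorem det_sub_smul_fin_two {R : Type*} [CommRing R] (M N : Matrix (Fin 2) (Fin 2) R) (x : R) :
    (M - x • N).det = M.det - x * polarDet M N + x ^ 2 * N.det := by
  simp only [det_fin_two, polarDet, Matrix.sub_apply, Matrix.smul_apply, smul_eq_mul]
  ring

theorem detPair_eq_polarDet (A B : Matrix (Fin 2) (Fin 2) ℂ) : detPair A B = polarDet A B := by
  simp [detPair, mixMat, polarDet, det_fin_two]
  ring

theorem polarDet_recMatrix_map (A : ℕ → Matrix (Fin 2) (Fin 2) ℂ) (s : ℕ)
    (B : Matrix (Fin 2) (Fin 2) ℂ) :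
    polarDet (recMatrix A s) (B.map C)
      = C B.trace - ∑ t ∈ Icc 1 s, C (detPair (A t) B) * X ^ t := by
  have hterm : ∀ t, C (detPair (A t) B) * X ^ t
      = C (A t 0 0) * X ^ t * C (B 1 1) + C (B 0 0) * (C (A t 1 1) * X ^ t)
        - C (A t 0 1) * X ^ t * C (B 1 0) - C (B 0 1) * (C (A t 1 0) * X ^ t) := by
    intro t
    rw [detPair_eq_polarDet, polarDet]
    simp only [map_add, map_sub, map_mul]
    ring
  simp only [polarDet, Matrix.map_apply, hterm, sum_sub_distrib, sum_add_distrib, ← sum_mul,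
    ← mul_sum, recMatrix_apply, trace_fin_two, map_add]
  simp only [↓reduceIte, Fin.isValue, zero_ne_one, one_ne_zero]
  ring

-- `det P_m = detStep A m (det P_{m-1})`; read coefficientwise, this is the recursion defining `c`.
noncomputable def detStep (A : ℕ → Matrix (Fin 2) (Fin 2) ℂ) (m : ℕ) (p : ℂ[X]) : ℂ[X] :=
  p - C (A m).trace * X ^ m + X ^ m * ∑ t ∈ Icc 1 (m - 1), C (detPair (A t) (A m)) * X ^ t
    + C (A m).det * X ^ (2 * m)

theorem det_recMatrix (A : ℕ → Matrix (Fin 2) (Fin 2) ℂ) {m : ℕ} (hm : 1 ≤ m) :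
    (recMatrix A m).det = detStep A m (recMatrix A (m - 1)).det := by
  obtain ⟨s, rfl⟩ : ∃ s, m = s + 1 := ⟨m - 1, by omega⟩
  have hsplit :
      recMatrix A (s + 1) = recMatrix A s - (X ^ (s + 1) : ℂ[X]) • (A (s + 1)).map C := by
    rw [recMatrix, recMatrix, sum_Icc_succ_top (by omega), sub_add_eq_sub_sub]
  have hdet : ((A (s + 1)).map C).det = C (A (s + 1)).det := (RingHom.map_det C _).symm
  rw [hsplit, det_sub_smul_fin_two, hdet, polarDet_recMatrix_map]
  simp only [detStep, Nat.add_sub_cancel]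
  ring

end TwoByTwo

section Coefficients

variable (A : ℕ → Matrix (Fin 2) (Fin 2) ℂ) (c : ℕ → ℕ → ℂ)

def IsCoeffUpdate (m : ℕ) : Prop :=
  (∀ i, 1 ≤ i → i ≤ m - 1 → c m i = c (m - 1) i) ∧
    c m m = c (m - 1) m + (A m).trace ∧
    (∀ ℓ, 1 ≤ ℓ → ℓ ≤ m - 2 → c m (m + ℓ) = c (m - 1) (m + ℓ) - detPair (A ℓ) (A m)) ∧
    c m (2 * m - 1) = -detPair (A (m - 1)) (A m) ∧
    c m (2 * m) = -(A m).det

theorem coeff_detStep (m : ℕ) (p : ℂ[X]) (k : ℕ) :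
    (detStep A m p).coeff k = p.coeff k - (if k = m then (A m).trace else 0)
      + (if m ≤ k ∧ k - m ∈ Icc 1 (m - 1) then detPair (A (k - m)) (A m) else 0)
      + if k = 2 * m then (A m).det else 0 := by
  simp only [detStep, coeff_add, coeff_sub, coeff_C_mul_X_pow, coeff_X_pow_mul',
    coeff_sum_C_mul_X_pow, ite_and]

theorem recurrencePoly_one (hc11 : c 1 1 = (A 1).trace) (hc12 : c 1 2 = -(A 1).det) :
    recurrencePoly (c 1) 2 = detStep A 1 1 := by
  ext k
  rw [coeff_recurrencePoly, coeff_detStep, coeff_one]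
  rcases (by omega : k = 0 ∨ k = 1 ∨ k = 2 ∨ 2 < k) with rfl | rfl | rfl | hk
  · simp
  · simp [hc11]
  · simp [hc12]
  · simp [show k ≠ 0 by omega, show k ≠ 1 by omega, show k ≠ 2 by omega, show ¬ k ≤ 2 by omega]

theorem recurrencePoly_eq_detStep {m : ℕ} (hm : 2 ≤ m) (hc : IsCoeffUpdate A c m) :
    recurrencePoly (c m) (2 * m) = detStep A m (recurrencePoly (c (m - 1)) (2 * (m - 1))) := by
  obtain ⟨hlow, hmid, hhigh, hpen, htop⟩ := hc
  ext k
  rw [coeff_detStep, coeff_recurrencePoly, coeff_recurrencePoly]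
  rcases (by omega : k = 0 ∨ (1 ≤ k ∧ k ≤ m - 1) ∨ k = m ∨ (m < k ∧ k ≤ 2 * m - 2) ∨
    k = 2 * m - 1 ∨ k = 2 * m ∨ 2 * m < k) with hk | hk | hk | hk | hk | hk | hk
  · simp [hk, show ¬ 0 = m by omega, show m ≠ 0 by omega]
  · simp [mem_Icc, hk.1, show k ≤ 2 * m by omega, show k ≤ 2 * (m - 1) by omega, hlow k hk.1 hk.2,
      show k ≠ m by omega, show ¬ m ≤ k by omega, show k ≠ 2 * m by omega]
  · simp [hk, mem_Icc, show 1 ≤ m by omega, show m ≤ 2 * m by omega, show m ≤ 2 * (m - 1) by omega,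
      show m ≠ 0 by omega, show m ≠ 2 * m by omega, hmid]
    ring
  · obtain ⟨ℓ, rfl⟩ : ∃ ℓ, k = m + ℓ := ⟨k - m, by omega⟩
    simp [mem_Icc, show 1 ≤ m + ℓ by omega, show m + ℓ ≤ 2 * m by omega,
      show m + ℓ ≤ 2 * (m - 1) by omega, show ℓ ≠ 0 by omega, show 1 ≤ ℓ by omega,
      show ℓ ≤ m - 1 by omega, show m + ℓ ≠ 2 * m by omega, hhigh ℓ (by omega) (by omega)]
    ring
  · simp [hk, mem_Icc, show 2 * m - 1 ≠ 0 by omega, show 1 ≤ 2 * m - 1 by omega,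
      show ¬ 2 * m - 1 ≤ 2 * (m - 1) by omega, show 2 * m - 1 ≠ m by omega,
      show m ≤ 2 * m - 1 by omega, show 2 * m - 1 - m = m - 1 by omega,
      show 1 ≤ m - 1 by omega, show 2 * m - 1 ≠ 2 * m by omega, hpen]
  · simp [hk, mem_Icc, show 2 * m ≠ 0 by omega, show 1 ≤ 2 * m by omega,
      show ¬ 2 * m ≤ 2 * (m - 1) by omega, show 2 * m ≠ m by omega, show 2 * m - m = m by omega,
      show ¬ m ≤ m - 1 by omega, htop]
  · simp [mem_Icc, show k ≠ 0 by omega, show ¬ k ≤ 2 * m by omega,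
      show ¬ k ≤ 2 * (m - 1) by omega, show k ≠ m by omega, show ¬ k - m ≤ m - 1 by omega,
      show k ≠ 2 * m by omega]

theorem det_recMatrix_eq_recurrencePoly (hc11 : c 1 1 = (A 1).trace)
    (hc12 : c 1 2 = -(A 1).det) (hrec : ∀ m, 2 ≤ m → IsCoeffUpdate A c m) {s : ℕ} (hs : 1 ≤ s) :
    (recMatrix A s).det = recurrencePoly (c s) (2 * s) := by
  induction s, hs using Nat.le_induction with
  | base =>
    rw [det_recMatrix A le_rfl, mul_one, recurrencePoly_one A c hc11 hc12]
    simp [recMatrix]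
  | succ m hm ih =>
    rw [det_recMatrix A (by omega),
      recurrencePoly_eq_detStep A c (by omega) (hrec (m + 1) (by omega))]
    simp [ih]

end Coefficients

theorem stmt_0 (s : ℕ) (hs : 1 ≤ s) (A : ℕ → Matrix (Fin 2) (Fin 2) ℂ)
    (a b : ℕ → ℂ)
    (ha : ∀ n, s ≤ n → a n = ∑ t ∈ Icc 1 s, (A t 0 0 * a (n - t) + A t 0 1 * b (n - t)))
    (hb : ∀ n, s ≤ n → b n = ∑ t ∈ Icc 1 s, (A t 1 0 * a (n - t) + A t 1 1 * b (n - t)))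
    (c : ℕ → ℕ → ℂ)
    (hc11 : c 1 1 = (A 1).trace)
    (hc12 : c 1 2 = -(A 1).det)
    (hrec : ∀ m, 2 ≤ m →
      ((∀ i, 1 ≤ i → i ≤ m - 1 → c m i = c (m - 1) i) ∧
       c m m = c (m - 1) m + (A m).trace ∧
       (∀ ℓ, 1 ≤ ℓ → ℓ ≤ m - 2 → c m (m + ℓ) = c (m - 1) (m + ℓ) - detPair (A ℓ) (A m)) ∧
       c m (2 * m - 1) = -detPair (A (m - 1)) (A m) ∧
       c m (2 * m) = -(A m).det)) :
    (∀ n, 2 * s ≤ n → a n = ∑ i ∈ Icc 1 (2 * s), c s i * a (n - i)) ∧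
    (∀ n, 2 * s ≤ n → b n = ∑ i ∈ Icc 1 (2 * s), c s i * b (n - i)) := by
  set v : Fin 2 → ℕ → ℂ := ![a, b]
  have hsys : ∀ i n, s ≤ n → ∑ j, aeval backShift (recMatrix A s i j) (v j) n = 0 := by
    refine aeval_backShift_recMatrix_eq_zero A s v fun i n hn => ?_
    fin_cases i
    · simpa [v] using ha n hn
    · simpa [v] using hb n hn
  have hv : ∀ k n, 2 * s ≤ n → v k n = ∑ i ∈ Icc 1 (2 * s), c s i * v k (n - i) := by
    intro k n hn
    have h := aeval_backShift_det_eq_zero _ (natDegree_adjugate_recMatrix_le A s) v hsys k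
      (show s + s ≤ n by omega)
    rwa [det_recMatrix_eq_recurrencePoly A c hc11 hc12 hrec hs, aeval_backShift_recurrencePoly,
      sub_eq_zero] at h
  exact ⟨hv 0, hv 1⟩
end

section
/- Let s ≥ 2 and let A₁,…,A_s be 2×2 complex matrices. Let M^{(s)} be the 2s×2s complex block companion matrix whose first two rows are (A₁ A₂ ⋯ A_s) (as 2×2 blocks) and whose remaining 2(s−1) rows form the block matrix (I_{2(s−1)} 0), i.e., M^{(s)}_{i+2, i} = 1 for 1 ≤ i ≤ 2s−2 and all other entries below the first two rows are 0. Define p^{(s)}(x) = det(M^{(s)} − x·I_{2s}), and similarly p^{(s−1)}(x) = det(M^{(s−1)} − x·I_{2(s−1)}) for the matrices A₁,…,A_{s−1}. Then p^{(s)}(x) = x²·p^{(s−1)}(x) − tr(A_s)·x^s + Σ_{ℓ=1}^{s−1} Det⟨A^{(ℓ,s)}⟩·x^{s−ℓ} + det(A_s). -/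
open Matrix Finset

/-- The `2s × 2s` block companion matrix whose first two rows are the blocks
`A₁ A₂ ⋯ A_s` and whose remaining rows form the block matrix `(I 0)`,
i.e. `M (i+2) i = 1` for `0 ≤ i < 2s - 2` and all other entries below the
first two rows vanish. -/
noncomputable def companionM (s : ℕ) (A : ℕ → Matrix (Fin 2) (Fin 2) ℂ) :
    Matrix (Fin (2 * s)) (Fin (2 * s)) ℂ :=
  Matrix.of fun i j =>
    if h : (i : ℕ) < 2 then
      A ((j : ℕ) / 2 + 1) ⟨(i : ℕ), h⟩ ⟨(j : ℕ) % 2, Nat.mod_lt _ (by norm_num)⟩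
    else if (j : ℕ) + 2 = (i : ℕ) then 1 else 0

/-! The key identity is `det (M^{(s)} - x I) = det P_s(x)` for the matrix polynomial
`P_n(x) = ∑_{k=1}^n x^(n-k) A_k - x^n I`. Right multiplication by the unipotent block-Toeplitz
matrix with blocks `x^(b-a) I` (`blockGeom`) runs Horner's scheme on the block columns and turns
`M^{(s)} - x I` into the block companion matrix of `P_1(x), …, P_s(x)`; a cyclic shift of the rows
by two (an even permutation) makes that block lower triangular with determinant `det P_s(x)`.
The recursion `P_s = x P_{s-1} + A_s`, the expansion `det (X + Y) = det X + det Y + Det⟨X, Y⟩`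
of 2×2 determinants and the linearity of `Det⟨·, Y⟩` then give the formula. -/

section detPair

variable (A B C : Matrix (Fin 2) (Fin 2) ℂ)

lemma detPair_eq :
    detPair A B = A 0 0 * B 1 1 + A 1 1 * B 0 0 - A 0 1 * B 1 0 - A 1 0 * B 0 1 := by
  simp only [detPair, mixMat, det_fin_two, of_apply, ↓reduceIte, Fin.isValue, one_ne_zero]
  ring

lemma det_add_fin_two : (A + B).det = A.det + B.det + detPair A B := by
  simp only [det_fin_two, detPair_eq, Matrix.add_apply]
  ring

lemma detPair_add_left : detPair (A + C) B = detPair A B + detPair C B := by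
  simp only [detPair_eq, Matrix.add_apply]
  ring

lemma detPair_sub_left : detPair (A - C) B = detPair A B - detPair C B := by
  simp only [detPair_eq, Matrix.sub_apply]
  ring

lemma detPair_smul_left (c : ℂ) : detPair (c • A) B = c * detPair A B := by
  simp only [detPair_eq, Matrix.smul_apply, smul_eq_mul]
  ring

lemma detPair_one_left : detPair 1 B = B.trace := by
  rw [detPair_eq, trace_fin_two, one_apply_eq, one_apply_eq, one_apply_ne one_ne_zero,
    one_apply_ne zero_ne_one]
  ring

lemma detPair_sum_left {ι : Type*} (t : Finset ι) (f : ι → Matrix (Fin 2) (Fin 2) ℂ) :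
    detPair (∑ i ∈ t, f i) B = ∑ i ∈ t, detPair (f i) B := by
  induction t using Finset.cons_induction with
  | empty => simp [detPair_eq]
  | cons a t ha ih => rw [sum_cons, sum_cons, detPair_add_left, ih]

end detPair

noncomputable def matPoly (A : ℕ → Matrix (Fin 2) (Fin 2) ℂ) (x : ℂ) (n : ℕ) :
    Matrix (Fin 2) (Fin 2) ℂ :=
  ∑ k ∈ Icc 1 n, x ^ (n - k) • A k - x ^ n • 1

section matPoly

variable (A : ℕ → Matrix (Fin 2) (Fin 2) ℂ) (x : ℂ) (n : ℕ)

lemma matPoly_succ : matPoly A x (n + 1) = x • matPoly A x n + A (n + 1) := by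
  have hsum : ∑ k ∈ Icc 1 (n + 1), x ^ (n + 1 - k) • A k
      = x • ∑ k ∈ Icc 1 n, x ^ (n - k) • A k + A (n + 1) := by
    rw [sum_Icc_succ_top (by omega), Nat.sub_self, pow_zero, one_smul, smul_sum]
    congr 1
    refine sum_congr rfl fun k hk => ?_
    rw [smul_smul, ← pow_succ', Nat.sub_add_comm (mem_Icc.mp hk).2]
  rw [matPoly, matPoly, hsum, smul_sub, smul_smul, ← pow_succ']
  abel

lemma mul_detPair_matPoly (B : Matrix (Fin 2) (Fin 2) ℂ) :
    x * detPair (matPoly A x n) B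
      = ∑ ℓ ∈ Icc 1 n, detPair (A ℓ) B * x ^ (n + 1 - ℓ) - B.trace * x ^ (n + 1) := by
  rw [matPoly, detPair_sub_left, detPair_sum_left, detPair_smul_left, detPair_one_left,
    mul_sub, mul_sum, pow_succ]
  congr 1
  · refine sum_congr rfl fun k hk => ?_
    rw [detPair_smul_left, Nat.sub_add_comm (mem_Icc.mp hk).2, pow_succ]
    ring
  · ring

lemma det_matPoly_succ :
    (matPoly A x (n + 1)).det = x ^ 2 * (matPoly A x n).det - (A (n + 1)).trace * x ^ (n + 1)
      + ∑ ℓ ∈ Icc 1 n, detPair (A ℓ) (A (n + 1)) * x ^ (n + 1 - ℓ) + (A (n + 1)).det := by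
  rw [matPoly_succ, det_add_fin_two, det_smul, Fintype.card_fin, detPair_smul_left,
    mul_detPair_matPoly]
  ring

end matPoly

lemma det_companionM (n : ℕ) (B : ℕ → Matrix (Fin 2) (Fin 2) ℂ) :
    (companionM (n + 1) B).det = (B (n + 1)).det := by
  let e : Fin (2 * (n + 1)) ≃ Fin (2 * n) ⊕ Fin 2 :=
    (finCongr (by ring)).trans finSumFinEquiv.symm
  let ρ : Equiv.Perm (Fin (2 * (n + 1))) := Equiv.addRight (1 + 1)
  let C : Matrix (Fin 2) (Fin (2 * n)) ℂ :=
    of fun i j => B ((j : ℕ) / 2 + 1) i ⟨(j : ℕ) % 2, Nat.mod_lt _ two_pos⟩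
  have he_inl (i : Fin (2 * n)) : (e.symm (.inl i) : ℕ) = i := rfl
  have he_inr (i : Fin 2) : (e.symm (.inr i) : ℕ) = 2 * n + i := rfl
  have hρ (k : Fin (2 * (n + 1))) : (ρ k : ℕ) = (k + 2) % (2 * (n + 1)) := by
    simp [ρ, Fin.val_add]
  have hρ_inl (i : Fin (2 * n)) : (ρ (e.symm (.inl i)) : ℕ) = i + 2 := by
    rw [hρ, he_inl]
    exact Nat.mod_eq_of_lt (by omega)
  have hρ_inr (i : Fin 2) : (ρ (e.symm (.inr i)) : ℕ) = i := by
    rw [hρ, he_inr, show 2 * n + i + 2 = i + 2 * (n + 1) by ring, Nat.add_mod_right]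
    exact Nat.mod_eq_of_lt (by omega)
  have hblocks : ((companionM (n + 1) B).submatrix ρ id).submatrix e.symm e.symm
      = fromBlocks 1 0 C (B (n + 1)) := by
    ext (i | i) (j | j)
    all_goals simp only [submatrix_apply, id_eq, fromBlocks_apply₁₁, fromBlocks_apply₁₂,
      fromBlocks_apply₂₁, fromBlocks_apply₂₂, companionM, C, of_apply, hρ_inl, hρ_inr, he_inl, he_inr]
    · rw [dif_neg (by omega), one_apply]
      simp only [add_left_inj, Fin.ext_iff, eq_comm]
    · rw [dif_neg (by omega), if_neg (by omega), Matrix.zero_apply]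
    · rw [dif_pos i.isLt]
    · have hdiv : (2 * n + j) / 2 = n := by omega
      have hmod : (2 * n + j) % 2 = j := by omega
      simp only [dif_pos i.isLt, hdiv, hmod]
  have hsign : Equiv.Perm.sign ρ = 1 := by
    change Equiv.Perm.sign (Equiv.addRight _) = 1
    rw [Equiv.addRight_add, map_mul, Int.units_mul_self]
  calc (companionM (n + 1) B).det
      = (((companionM (n + 1) B).submatrix ρ id).submatrix e.symm e.symm).det := by
        rw [det_submatrix_equiv_self, det_permute, hsign, Units.val_one, Int.cast_one, one_mul]
    _ = (B (n + 1)).det := by rw [hblocks, det_fromBlocks_zero₁₂, det_one, one_mul]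

noncomputable def blockGeom {R : Type*} [MonoidWithZero R] (s : ℕ) (x : R) :
    Matrix (Fin (2 * s)) (Fin (2 * s)) R :=
  of fun i j =>
    if (i : ℕ) % 2 = (j : ℕ) % 2 ∧ (i : ℕ) / 2 ≤ (j : ℕ) / 2 then x ^ ((j : ℕ) / 2 - (i : ℕ) / 2)
    else 0

lemma det_blockGeom {R : Type*} [CommRing R] (s : ℕ) (x : R) : (blockGeom s x).det = 1 := by
  rw [det_of_isUpperTriangular]
  · simp [blockGeom]
  · intro i j hji
    rw [blockGeom, of_apply, if_neg]
    have : (j : ℕ) < i := hji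
    omega

lemma sum_companionRow_mul_blockGeom (s : ℕ) (A : ℕ → Matrix (Fin 2) (Fin 2) ℂ) (x : ℂ)
    (i : Fin 2) (j : Fin (2 * s)) :
    ∑ k : Fin (2 * s), A ((k : ℕ) / 2 + 1) i ⟨(k : ℕ) % 2, Nat.mod_lt _ two_pos⟩ * blockGeom s x k j
      = ∑ ℓ ∈ Icc 1 ((j : ℕ) / 2 + 1),
          x ^ ((j : ℕ) / 2 + 1 - ℓ) * A ℓ i ⟨(j : ℕ) % 2, Nat.mod_lt _ two_pos⟩ := by
  simp only [blockGeom, of_apply, mul_ite, mul_zero]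
  rw [Fin.sum_univ_eq_sum_range (fun k => if k % 2 = (j : ℕ) % 2 ∧ k / 2 ≤ (j : ℕ) / 2 then
    A (k / 2 + 1) i ⟨k % 2, Nat.mod_lt _ two_pos⟩ * x ^ ((j : ℕ) / 2 - k / 2) else 0), ← sum_filter]
  refine sum_nbij' (fun k => k / 2 + 1) (fun ℓ => 2 * (ℓ - 1) + (j : ℕ) % 2) ?_ ?_ ?_ ?_ ?_
  all_goals intro k hk
  all_goals simp only [mem_filter, mem_range, mem_Icc] at hk ⊢
  · omega
  · omega
  · omega
  · omega
  · simp only [hk.2.1, Nat.add_sub_add_right, mul_comm]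

lemma companionM_sub_smul_mul_blockGeom (s : ℕ) (A : ℕ → Matrix (Fin 2) (Fin 2) ℂ) (x : ℂ) :
    (companionM s A - x • 1) * blockGeom s x = companionM s (matPoly A x) := by
  ext i j
  rw [sub_mul, smul_mul, one_mul, Matrix.sub_apply, Matrix.smul_apply, mul_apply, smul_eq_mul]
  by_cases hi : (i : ℕ) < 2
  · simp only [companionM, of_apply, dif_pos hi]
    rw [sum_companionRow_mul_blockGeom]
    simp only [matPoly, blockGeom, of_apply, Matrix.sub_apply, Matrix.sum_apply, Matrix.smul_apply,
      smul_eq_mul, one_apply, Fin.ext_iff]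
    rw [Nat.mod_eq_of_lt hi, Nat.div_eq_of_lt hi, Nat.sub_zero, pow_succ']
    simp only [zero_le, and_true]
    split_ifs <;> ring
  · have hi2 : 2 ≤ (i : ℕ) := not_lt.mp hi
    simp only [companionM, of_apply, dif_neg hi]
    rw [sum_eq_single ⟨i - 2, by omega⟩ (fun k _ hk => by
      rw [if_neg (fun h => hk (Fin.ext (by simp only; omega))), zero_mul])
      (by simp), if_pos (by simp only; omega), one_mul, blockGeom, of_apply, of_apply]
    dsimp only
    by_cases hdiag : (j : ℕ) + 2 = i
    · rw [if_pos ⟨by omega, by omega⟩, if_neg (by omega), if_pos hdiag,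
        show (j : ℕ) / 2 - (i - 2) / 2 = 0 by omega, pow_zero, mul_zero, sub_zero]
    · rw [if_neg hdiag]
      by_cases hcur : (i : ℕ) % 2 = j % 2 ∧ (i : ℕ) / 2 ≤ j / 2
      · rw [if_pos ⟨by omega, by omega⟩, if_pos hcur,
          show (j : ℕ) / 2 - (i - 2) / 2 = j / 2 - i / 2 + 1 by omega, pow_succ', sub_self]
      · rw [if_neg (by omega), if_neg hcur, mul_zero, sub_zero]

lemma det_companionM_sub_smul (n : ℕ) (A : ℕ → Matrix (Fin 2) (Fin 2) ℂ) (x : ℂ) :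
    (companionM (n + 1) A - x • 1).det = (matPoly A x (n + 1)).det := by
  rw [← mul_one (companionM (n + 1) A - x • 1).det, ← det_blockGeom (n + 1) x, ← det_mul,
    companionM_sub_smul_mul_blockGeom, det_companionM]

theorem stmt_2 (s : ℕ) (hs : 2 ≤ s) (A : ℕ → Matrix (Fin 2) (Fin 2) ℂ) :
    ∀ x : ℂ,
      (companionM s A - x • (1 : Matrix (Fin (2 * s)) (Fin (2 * s)) ℂ)).det =
        x ^ 2 * (companionM (s - 1) A
            - x • (1 : Matrix (Fin (2 * (s - 1))) (Fin (2 * (s - 1))) ℂ)).det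
        - (A s).trace * x ^ s
        + (∑ ℓ ∈ Icc 1 (s - 1), detPair (A ℓ) (A s) * x ^ (s - ℓ))
        + (A s).det := by
  intro x
  obtain ⟨n, rfl⟩ : ∃ n, s = n + 1 + 1 := ⟨s - 2, by omega⟩
  rw [Nat.add_sub_cancel, det_companionM_sub_smul, det_companionM_sub_smul, det_matPoly_succ]
end

section
/- Let A₁, A₂ be 2×2 complex matrices with entries A_t = (α^{(t)}_{i,j}), and let (a_n)_{n≥0}, (b_n)_{n≥0} be complex sequences satisfying, for all n ≥ 2, a_n = α^{(1)}_{1,1} a_{n−1} + α^{(1)}_{1,2} b_{n−1} + α^{(2)}_{1,1} a_{n−2} + α^{(2)}_{1,2} b_{n−2} and b_n = α^{(1)}_{2,1} a_{n−1} + α^{(1)}_{2,2} b_{n−1} + α^{(2)}_{2,1} a_{n−2} + α^{(2)}_{2,2} b_{n−2}. Then both sequences satisfy the order-4 recurrence z_n = tr(A₁)·z_{n−1} + (tr(A₂) − det(A₁))·z_{n−2} − Det⟨A^{(1,2)}⟩·z_{n−3} − det(A₂)·z_{n−4} for all n ≥ 4. -/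
open Matrix

/-
The vectors `v n = (a n, b n)` satisfy `v (n + 2) = A₁ v (n + 1) + A₂ v n`, so multiplying by the
adjugate of `P(x) = x² - x A₁ - A₂` shows that each coordinate is annihilated by `det P(S)`, `S` the
shift. The coefficient of `x` in `det P(x)` is the mixed part `det (A₁ + A₂) - det A₁ - det A₂`,
which is `Det⟨A^{(1,2)}⟩`. For 2×2 matrices the identity is checked by unrolling `v (n + 4)` down
to the free values `v (n + 1)`, `v n`.
-/
theorem detPair_eq_det_add_sub (A B : Matrix (Fin 2) (Fin 2) ℂ) :
    detPair A B = (A + B).det - A.det - B.det := by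
  simp [detPair, mixMat, det_fin_two]
  ring

theorem Matrix.fin_two_mulVec_recurrence_order_four {R : Type*} [CommRing R]
    (A₁ A₂ : Matrix (Fin 2) (Fin 2) R) (v : ℕ → Fin 2 → R)
    (hv : ∀ n, v (n + 2) = A₁ *ᵥ v (n + 1) + A₂ *ᵥ v n) (n : ℕ) :
    v (n + 4) = A₁.trace • v (n + 3) + (A₂.trace - A₁.det) • v (n + 2)
      - ((A₁ + A₂).det - A₁.det - A₂.det) • v (n + 1) - A₂.det • v n := by
  have h4 : v (n + 4) = A₁ *ᵥ v (n + 3) + A₂ *ᵥ v (n + 2) := hv (n + 2)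
  have h3 : v (n + 3) = A₁ *ᵥ v (n + 2) + A₂ *ᵥ v (n + 1) := hv (n + 1)
  rw [h4, h3, hv n]
  ext i
  fin_cases i <;>
    simp only [Pi.add_apply, Pi.sub_apply, Pi.smul_apply, smul_eq_mul, mulVec, dotProduct,
      Fin.sum_univ_two, det_fin_two, trace_fin_two, Matrix.add_apply, Fin.zero_eta, Fin.mk_one] <;>
    ring

theorem stmt_5 (A₁ A₂ : Matrix (Fin 2) (Fin 2) ℂ) (a b : ℕ → ℂ)
    (ha : ∀ n, 2 ≤ n → a n = A₁ 0 0 * a (n - 1) + A₁ 0 1 * b (n - 1)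
        + A₂ 0 0 * a (n - 2) + A₂ 0 1 * b (n - 2))
    (hb : ∀ n, 2 ≤ n → b n = A₁ 1 0 * a (n - 1) + A₁ 1 1 * b (n - 1)
        + A₂ 1 0 * a (n - 2) + A₂ 1 1 * b (n - 2)) :
    (∀ n, 4 ≤ n → a n = A₁.trace * a (n - 1) + (A₂.trace - A₁.det) * a (n - 2)
        - detPair A₁ A₂ * a (n - 3) - A₂.det * a (n - 4)) ∧
    (∀ n, 4 ≤ n → b n = A₁.trace * b (n - 1) + (A₂.trace - A₁.det) * b (n - 2)
        - detPair A₁ A₂ * b (n - 3) - A₂.det * b (n - 4)) := by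
  set v : ℕ → Fin 2 → ℂ := fun n => ![a n, b n]
  have hv : ∀ n, v (n + 2) = A₁ *ᵥ v (n + 1) + A₂ *ᵥ v n := fun n => by
    ext i
    fin_cases i <;> simp [v, ha (n + 2) le_add_self, hb (n + 2) le_add_self] <;> ring
  have hrec (i : Fin 2) (m : ℕ) := congrFun (fin_two_mulVec_recurrence_order_four A₁ A₂ v hv m) i
  rw [← detPair_eq_det_add_sub] at hrec
  constructor <;> intro n hn <;> obtain ⟨m, rfl⟩ := Nat.exists_eq_add_of_le' hn
  · simpa [v] using hrec 0 m
  · simpa [v] using hrec 1 m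
end

section
/- Let A₁, A₂, A₃ be 2×2 complex matrices with entries A_t = (α^{(t)}_{i,j}), and let (a_n)_{n≥0}, (b_n)_{n≥0} be complex sequences satisfying, for all n ≥ 3, a_n = Σ_{t=1}^{3} (α^{(t)}_{1,1} a_{n−t} + α^{(t)}_{1,2} b_{n−t}) and b_n = Σ_{t=1}^{3} (α^{(t)}_{2,1} a_{n−t} + α^{(t)}_{2,2} b_{n−t}). Then both sequences satisfy the order-6 recurrence z_n = tr(A₁)·z_{n−1} + (tr(A₂) − det(A₁))·z_{n−2} + (tr(A₃) − Det⟨A^{(1,2)}⟩)·z_{n−3} − (det(A₂) + Det⟨A^{(1,3)}⟩)·z_{n−4} − Det⟨A^{(2,3)}⟩·z_{n−5} − det(A₃)·z_{n−6} for all n ≥ 6. -/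
open Matrix

lemma aux_rec (p q r s p2 q2 r2 s2 p3 q3 r3 s3 : ℂ) (a b : ℕ → ℂ)
    (ha : ∀ n, 3 ≤ n → a n = p * a (n-1) + q * b (n-1) + p2 * a (n-2) + q2 * b (n-2)
        + p3 * a (n-3) + q3 * b (n-3))
    (hb : ∀ n, 3 ≤ n → b n = r * a (n-1) + s * b (n-1) + r2 * a (n-2) + s2 * b (n-2)
        + r3 * a (n-3) + s3 * b (n-3)) :
    ∀ n, 6 ≤ n → a n = (p + s) * a (n-1) + ((p2 + s2) - (p*s - q*r)) * a (n-2)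
      + ((p3 + s3) - (p*s2 - q2*r + p2*s - q*r2)) * a (n-3)
      - ((p2*s2 - q2*r2) + (p*s3 - q3*r + p3*s - q*r3)) * a (n-4)
      - (p2*s3 - q3*r2 + p3*s2 - q2*r3) * a (n-5)
      - (p3*s3 - q3*r3) * a (n-6) := by
  intro n hn
  obtain ⟨m, rfl⟩ : ∃ m, n = m + 6 := ⟨n - 6, by omega⟩
  have h6 := ha (m+6) (by omega)
  have h5a := ha (m+5) (by omega)
  have h5b := hb (m+5) (by omega)
  have h4a := ha (m+4) (by omega)
  have h4b := hb (m+4) (by omega)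
  have h3a := ha (m+3) (by omega)
  have h3b := hb (m+3) (by omega)
  simp only [show m+6-1 = m+5 from rfl, show m+6-2 = m+4 from rfl,
    show m+6-3 = m+3 from rfl, show m+6-4 = m+2 from rfl,
    show m+6-5 = m+1 from rfl, show m+6-6 = m from rfl,
    show m+5-1 = m+4 from rfl, show m+5-2 = m+3 from rfl, show m+5-3 = m+2 from rfl,
    show m+4-1 = m+3 from rfl, show m+4-2 = m+2 from rfl, show m+4-3 = m+1 from rfl,
    show m+3-1 = m+2 from rfl, show m+3-2 = m+1 from rfl, show m+3-3 = m from rfl] at *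
  rw [h6, h5a, h5b, h4a, h4b, h3a, h3b]
  ring

theorem stmt_6 (A₁ A₂ A₃ : Matrix (Fin 2) (Fin 2) ℂ) (a b : ℕ → ℂ)
    (ha : ∀ n, 3 ≤ n → a n = A₁ 0 0 * a (n - 1) + A₁ 0 1 * b (n - 1)
        + A₂ 0 0 * a (n - 2) + A₂ 0 1 * b (n - 2)
        + A₃ 0 0 * a (n - 3) + A₃ 0 1 * b (n - 3))
    (hb : ∀ n, 3 ≤ n → b n = A₁ 1 0 * a (n - 1) + A₁ 1 1 * b (n - 1)
        + A₂ 1 0 * a (n - 2) + A₂ 1 1 * b (n - 2)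
        + A₃ 1 0 * a (n - 3) + A₃ 1 1 * b (n - 3)) :
    (∀ n, 6 ≤ n → a n = A₁.trace * a (n - 1) + (A₂.trace - A₁.det) * a (n - 2)
        + (A₃.trace - detPair A₁ A₂) * a (n - 3)
        - (A₂.det + detPair A₁ A₃) * a (n - 4)
        - detPair A₂ A₃ * a (n - 5) - A₃.det * a (n - 6)) ∧
    (∀ n, 6 ≤ n → b n = A₁.trace * b (n - 1) + (A₂.trace - A₁.det) * b (n - 2)
        + (A₃.trace - detPair A₁ A₂) * b (n - 3)
        - (A₂.det + detPair A₁ A₃) * b (n - 4)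
        - detPair A₂ A₃ * b (n - 5) - A₃.det * b (n - 6)) := by
  constructor
  · intro n hn
    rw [aux_rec (A₁ 0 0) (A₁ 0 1) (A₁ 1 0) (A₁ 1 1) (A₂ 0 0) (A₂ 0 1) (A₂ 1 0) (A₂ 1 1)
      (A₃ 0 0) (A₃ 0 1) (A₃ 1 0) (A₃ 1 1) a b ha hb n hn]
    simp only [detPair, mixMat, Matrix.det_fin_two, Matrix.trace_fin_two, Matrix.of_apply]
    norm_num
    ring
  · intro n hn
    rw [aux_rec (A₁ 1 1) (A₁ 1 0) (A₁ 0 1) (A₁ 0 0) (A₂ 1 1) (A₂ 1 0) (A₂ 0 1) (A₂ 0 0)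
      (A₃ 1 1) (A₃ 1 0) (A₃ 0 1) (A₃ 0 0) b a
      (fun n h => by rw [hb n h]; ring) (fun n h => by rw [ha n h]; ring) n hn]
    simp only [detPair, mixMat, Matrix.det_fin_two, Matrix.trace_fin_two, Matrix.of_apply]
    norm_num
    ring
end

section
/- Fix k ≥ 1 and let (a_n)_{n≥0}, (b_n)_{n≥0} be complex (or integer) sequences satisfying, for all n ≥ k, a_n = Σ_{i=1}^{k} a_{n−i} and b_n = Σ_{i=1}^{k} (a_{n−i} + b_{n−i}); set t_n = a_n + b_n. Define vectors c^{(k)} ∈ ℤ^{2k} by c^{(1)} = (2, −1) and, for k ≥ 2, c^{(k)}_i = c^{(k−1)}_i for 1 ≤ i ≤ k−1, c^{(k)}_k = c^{(k−1)}_k + 2, c^{(k)}_{k+ℓ} = c^{(k−1)}_{k+ℓ} − 2 for 1 ≤ ℓ ≤ k−2, c^{(k)}_{2k−1} = −2, and c^{(k)}_{2k} = −1 (treating c^{(k−1)} as padded with zeros in positions 2k−1 and 2k). Then each of the sequences (a_n), (b_n), (t_n) satisfies the order-2k recurrence z_n = Σ_{i=1}^{2k} c^{(k)}_i z_{n−i}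 for all n ≥ 2k. -/
/-! With `L z n = z n - ∑_{i=1}^k z (n - i)`, the sequence `a` is killed by `L` and `L b = a`
(both from index `k` on), so `L (L z)` vanishes from index `2k` on for `z = a, b, a + b`.
Expanding `L (L z) n` gives `z n - ∑_{i=1}^{2k} c_i z (n - i)` with the coefficients of
`(x^k - x^{k-1} - ⋯ - 1)^2`, namely `c_i = 3 - i` for `i ≤ k` and `c_i = i - 2k - 1` for
`k < i ≤ 2k`; the recursion defining `c` produces exactly these values. -/

open Finset

theorem sum_Icc_sum_Icc_add {M : Type*} [AddCommMonoid M] (k : ℕ) (w : ℕ → M) :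
    ∑ j ∈ Icc 1 k, ∑ i ∈ Icc 1 k, w (j + i) =
      ∑ s ∈ Icc 1 (2 * k), #(Icc (max 1 (s - k)) (min k (s - 1))) • w s := by
  calc ∑ j ∈ Icc 1 k, ∑ i ∈ Icc 1 k, w (j + i)
      = ∑ j ∈ Icc 1 k, ∑ s ∈ Icc (j + 1) (j + k), w s := by
        refine sum_congr rfl fun j _ => ?_
        rw [← map_add_left_Icc, sum_map]
        rfl
    _ = ∑ s ∈ Icc 1 (2 * k), ∑ _j ∈ Icc (max 1 (s - k)) (min k (s - 1)), w s :=
        sum_comm' fun j s => by simp only [mem_Icc]; omega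
    _ = _ := by simp only [sum_const]

def kbonacciDefect {R : Type*} [Ring R] (k : ℕ) (z : ℕ → R) (n : ℕ) : R :=
  z n - ∑ i ∈ Icc 1 k, z (n - i)

def kbonacciSqCoeff (k i : ℕ) : ℤ :=
  if i ≤ k then 3 - i else i - 2 * k - 1

section KbonacciDefect

variable {R : Type*} [Ring R] (k : ℕ)

theorem kbonacciDefect_add (f g : ℕ → R) :
    kbonacciDefect k (f + g) = kbonacciDefect k f + kbonacciDefect k g := by
  ext n
  simp only [kbonacciDefect, Pi.add_apply, sum_add_distrib]
  abel

theorem kbonacciDefect_congr {f g : ℕ → R} {n : ℕ} (h : ∀ m, n - k ≤ m → f m = g m) :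
    kbonacciDefect k f n = kbonacciDefect k g n := by
  unfold kbonacciDefect
  rw [h n (Nat.sub_le n k),
    sum_congr rfl fun i hi => h (n - i) (by simp only [mem_Icc] at hi; omega)]

theorem kbonacciSqCoeff_mul (w : R) {s : ℕ} (hs : s ∈ Icc 1 (2 * k)) :
    (kbonacciSqCoeff k s : R) * w =
      (if s ≤ k then 2 * w else 0) - #(Icc (max 1 (s - k)) (min k (s - 1))) • w := by
  have hcount : (kbonacciSqCoeff k s : ℤ) =
      (if s ≤ k then 2 else 0) - #(Icc (max 1 (s - k)) (min k (s - 1))) := by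
    simp only [mem_Icc] at hs
    simp only [kbonacciSqCoeff, Nat.card_Icc]
    split_ifs <;> omega
  rw [hcount, nsmul_eq_mul]
  split_ifs <;> push_cast <;> noncomm_ring

theorem kbonacciDefect_kbonacciDefect (z : ℕ → R) (n : ℕ) :
    kbonacciDefect k (kbonacciDefect k z) n =
      z n - ∑ i ∈ Icc 1 (2 * k), (kbonacciSqCoeff k i : R) * z (n - i) := by
  have hlow : ∑ s ∈ Icc 1 (2 * k), (if s ≤ k then 2 * z (n - s) else 0) =
      2 * ∑ i ∈ Icc 1 k, z (n - i) := by
    rw [← sum_filter, mul_sum]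
    congr 1
    ext s
    simp only [mem_filter, mem_Icc]
    omega
  have hdouble := sum_Icc_sum_Icc_add k fun s => z (n - s)
  simp only [← Nat.sub_sub] at hdouble
  simp only [kbonacciDefect, sum_sub_distrib]
  rw [sum_congr rfl fun s hs => kbonacciSqCoeff_mul k (z (n - s)) hs, sum_sub_distrib, hlow,
    ← hdouble]
  noncomm_ring

end KbonacciDefect

theorem eq_kbonacciSqCoeff (c : ℕ → ℕ → ℤ) (hc11 : c 1 1 = 2) (hc12 : c 1 2 = -1)
    (hrec : ∀ m, 2 ≤ m →
      ((∀ i, 1 ≤ i → i ≤ m - 1 → c m i = c (m - 1) i) ∧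
       c m m = c (m - 1) m + 2 ∧
       (∀ ℓ, 1 ≤ ℓ → ℓ ≤ m - 2 → c m (m + ℓ) = c (m - 1) (m + ℓ) - 2) ∧
       c m (2 * m - 1) = -2 ∧
       c m (2 * m) = -1))
    (k i : ℕ) (hi : i ∈ Icc 1 (2 * k)) : c k i = kbonacciSqCoeff k i := by
  obtain ⟨hi1, hi2⟩ := mem_Icc.mp hi
  clear hi
  induction k generalizing i with
  | zero => omega
  | succ k ih =>
    rcases Nat.eq_zero_or_pos k with rfl | hk
    · interval_cases i <;> simp [kbonacciSqCoeff, hc11, hc12]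
    obtain ⟨hlow, hmid, hhigh, hpen, hlast⟩ := hrec (k + 1) (by omega)
    simp only [Nat.add_sub_cancel] at hlow hmid hhigh
    unfold kbonacciSqCoeff at ih ⊢
    rcases (by omega : i ≤ k ∨ i = k + 1 ∨ (k + 2 ≤ i ∧ i ≤ 2 * k) ∨ i = 2 * k + 1 ∨
      i = 2 * k + 2) with h | rfl | h | rfl | rfl
    · rw [hlow i hi1 h, ih i hi1 (by omega)]
      split_ifs <;> omega
    · rw [hmid, ih (k + 1) (by omega) (by omega)]
      split_ifs <;> omega
    · obtain ⟨ℓ, rfl⟩ : ∃ ℓ, i = k + 1 + ℓ := ⟨i - (k + 1), by omega⟩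
      rw [hhigh ℓ (by omega) (by omega), ih (k + 1 + ℓ) (by omega) (by omega)]
      split_ifs <;> omega
    · rw [show 2 * k + 1 = 2 * (k + 1) - 1 by omega, hpen]
      split_ifs <;> omega
    · rw [show 2 * k + 2 = 2 * (k + 1) by omega, hlast]
      split_ifs <;> omega

theorem stmt_7_general (k : ℕ) (a b t : ℕ → ℂ)
    (ha : ∀ n, k ≤ n → a n = ∑ i ∈ Icc 1 k, a (n - i))
    (hb : ∀ n, k ≤ n → b n = ∑ i ∈ Icc 1 k, (a (n - i) + b (n - i)))
    (ht : ∀ n, t n = a n + b n)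
    (c : ℕ → ℕ → ℤ)
    (hc11 : c 1 1 = 2)
    (hc12 : c 1 2 = -1)
    (hrec : ∀ m, 2 ≤ m →
      ((∀ i, 1 ≤ i → i ≤ m - 1 → c m i = c (m - 1) i) ∧
       c m m = c (m - 1) m + 2 ∧
       (∀ ℓ, 1 ≤ ℓ → ℓ ≤ m - 2 → c m (m + ℓ) = c (m - 1) (m + ℓ) - 2) ∧
       c m (2 * m - 1) = -2 ∧
       c m (2 * m) = -1)) :
    (∀ n, 2 * k ≤ n → a n = ∑ i ∈ Icc 1 (2 * k), (c k i : ℂ) * a (n - i)) ∧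
    (∀ n, 2 * k ≤ n → b n = ∑ i ∈ Icc 1 (2 * k), (c k i : ℂ) * b (n - i)) ∧
    (∀ n, 2 * k ≤ n → t n = ∑ i ∈ Icc 1 (2 * k), (c k i : ℂ) * t (n - i)) := by
  have hLa : ∀ m, k ≤ m → kbonacciDefect k a m = 0 := fun m hm =>
    sub_eq_zero.mpr (ha m hm)
  have hLb : ∀ m, k ≤ m → kbonacciDefect k b m = a m := fun m hm => by
    rw [kbonacciDefect, hb m hm, sum_add_distrib, ← ha m hm, add_sub_cancel_right]
  have hLLa : ∀ n, 2 * k ≤ n → kbonacciDefect k (kbonacciDefect k a) n = 0 := fun n hn => by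
    rw [kbonacciDefect_congr k (g := 0) fun m hm => hLa m (by omega)]
    simp only [kbonacciDefect, Pi.zero_apply, sum_const_zero, sub_self]
  have hLLb : ∀ n, 2 * k ≤ n → kbonacciDefect k (kbonacciDefect k b) n = 0 := fun n hn => by
    rw [kbonacciDefect_congr k fun m hm => hLb m (by omega), hLa n (by omega)]
  have hLLt : ∀ n, 2 * k ≤ n → kbonacciDefect k (kbonacciDefect k t) n = 0 := fun n hn => by
    rw [show t = a + b from funext ht, kbonacciDefect_add, kbonacciDefect_add, Pi.add_apply,
      hLLa n hn, hLLb n hn, add_zero]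
  have hrecurrence : ∀ z : ℕ → ℂ, ∀ n, kbonacciDefect k (kbonacciDefect k z) n = 0 →
      z n = ∑ i ∈ Icc 1 (2 * k), (c k i : ℂ) * z (n - i) := fun z n h => by
    rw [sum_congr rfl fun i hi => by rw [eq_kbonacciSqCoeff c hc11 hc12 hrec k i hi]]
    rwa [kbonacciDefect_kbonacciDefect, sub_eq_zero] at h
  exact ⟨fun n hn => hrecurrence a n (hLLa n hn), fun n hn => hrecurrence b n (hLLb n hn),
    fun n hn => hrecurrence t n (hLLt n hn)⟩

theorem stmt_7 (k : ℕ) (hk : 1 ≤ k) (a b t : ℕ → ℂ)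
    (ha : ∀ n, k ≤ n → a n = ∑ i ∈ Icc 1 k, a (n - i))
    (hb : ∀ n, k ≤ n → b n = ∑ i ∈ Icc 1 k, (a (n - i) + b (n - i)))
    (ht : ∀ n, t n = a n + b n)
    (c : ℕ → ℕ → ℤ)
    (hc11 : c 1 1 = 2)
    (hc12 : c 1 2 = -1)
    (hrec : ∀ m, 2 ≤ m →
      ((∀ i, 1 ≤ i → i ≤ m - 1 → c m i = c (m - 1) i) ∧
       c m m = c (m - 1) m + 2 ∧
       (∀ ℓ, 1 ≤ ℓ → ℓ ≤ m - 2 → c m (m + ℓ) = c (m - 1) (m + ℓ) - 2) ∧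
       c m (2 * m - 1) = -2 ∧
       c m (2 * m) = -1)) :
    (∀ n, 2 * k ≤ n → a n = ∑ i ∈ Icc 1 (2 * k), (c k i : ℂ) * a (n - i)) ∧
    (∀ n, 2 * k ≤ n → b n = ∑ i ∈ Icc 1 (2 * k), (c k i : ℂ) * b (n - i)) ∧
    (∀ n, 2 * k ≤ n → t n = ∑ i ∈ Icc 1 (2 * k), (c k i : ℂ) * t (n - i)) :=
  stmt_7_general k a b t ha hb ht c hc11 hc12 hrec
end

section
/- Let (a_n)_{n≥0}, (b_n)_{n≥0} be sequences satisfying a_n = a_{n−1} + a_{n−2} + a_{n−3} and b_n = (a_{n−1} + b_{n−1}) + (a_{n−2} + b_{n−2}) + (a_{n−3} + b_{n−3}) for all n ≥ 3, and set t_n = a_n + b_n. Then each of (a_n), (b_n), (t_n) satisfies the order-6 recurrence z_n = 2z_{n−1} + z_{n−2} − 3z_{n−4} − 2z_{n−5} − z_{n−6} for all n ≥ 6. -/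
theorem stmt_10 (a b t : ℕ → ℂ)
    (ha : ∀ n, 3 ≤ n → a n = a (n - 1) + a (n - 2) + a (n - 3))
    (hb : ∀ n, 3 ≤ n → b n = (a (n - 1) + b (n - 1)) + (a (n - 2) + b (n - 2))
        + (a (n - 3) + b (n - 3)))
    (ht : ∀ n, t n = a n + b n) :
    (∀ n, 6 ≤ n → a n = 2 * a (n - 1) + a (n - 2) - 3 * a (n - 4)
        - 2 * a (n - 5) - a (n - 6)) ∧
    (∀ n, 6 ≤ n → b n = 2 * b (n - 1) + b (n - 2) - 3 * b (n - 4)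
        - 2 * b (n - 5) - b (n - 6)) ∧
    (∀ n, 6 ≤ n → t n = 2 * t (n - 1) + t (n - 2) - 3 * t (n - 4)
        - 2 * t (n - 5) - t (n - 6)) := by
  have Ha : ∀ m : ℕ, a (m + 6) = 2 * a (m + 5) + a (m + 4) - 3 * a (m + 2)
      - 2 * a (m + 1) - a m := by
    intro m
    have h6 := ha (m + 6) (by omega)
    have h5 := ha (m + 5) (by omega)
    have h4 := ha (m + 4) (by omega)
    have h3 := ha (m + 3) (by omega)
    simp only [show m + 6 - 1 = m + 5 by omega, show m + 6 - 2 = m + 4 by omega,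
      show m + 6 - 3 = m + 3 by omega, show m + 5 - 1 = m + 4 by omega,
      show m + 5 - 2 = m + 3 by omega, show m + 5 - 3 = m + 2 by omega,
      show m + 4 - 1 = m + 3 by omega, show m + 4 - 2 = m + 2 by omega,
      show m + 4 - 3 = m + 1 by omega, show m + 3 - 1 = m + 2 by omega,
      show m + 3 - 2 = m + 1 by omega, show m + 3 - 3 = m by omega] at *
    linear_combination h6 - h5 - h4 - h3
  have Hb : ∀ m : ℕ, b (m + 6) = 2 * b (m + 5) + b (m + 4) - 3 * b (m + 2)
      - 2 * b (m + 1) - b m := by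
    intro m
    have g6 := hb (m + 6) (by omega)
    have g5 := hb (m + 5) (by omega)
    have g4 := hb (m + 4) (by omega)
    have g3 := hb (m + 3) (by omega)
    have h5 := ha (m + 5) (by omega)
    have h4 := ha (m + 4) (by omega)
    have h3 := ha (m + 3) (by omega)
    simp only [show m + 6 - 1 = m + 5 by omega, show m + 6 - 2 = m + 4 by omega,
      show m + 6 - 3 = m + 3 by omega, show m + 5 - 1 = m + 4 by omega,
      show m + 5 - 2 = m + 3 by omega, show m + 5 - 3 = m + 2 by omega,
      show m + 4 - 1 = m + 3 by omega, show m + 4 - 2 = m + 2 by omega,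
      show m + 4 - 3 = m + 1 by omega, show m + 3 - 1 = m + 2 by omega,
      show m + 3 - 2 = m + 1 by omega, show m + 3 - 3 = m by omega] at *
    linear_combination g6 - g5 - g4 - g3 + h5 + h4 + h3
  refine ⟨?_, ?_, ?_⟩ <;> intro n hn <;>
    obtain ⟨m, rfl⟩ : ∃ m, n = m + 6 := ⟨n - 6, by omega⟩ <;>
    simp only [show m + 6 - 1 = m + 5 by omega, show m + 6 - 2 = m + 4 by omega,
      show m + 6 - 4 = m + 2 by omega, show m + 6 - 5 = m + 1 by omega,
      show m + 6 - 6 = m by omega]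
  · exact Ha m
  · exact Hb m
  · simp only [ht]
    linear_combination Ha m + Hb m
end
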